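/- arXiv:2006.03944 — 3 statements merged into one kernel-verified Lean document; each statement's English description precedes it below -/
import Mathlib

section
/- Let c_l, c_g be nonzero reals. Then ∫₀¹∫₀¹ ln((1 - c_l·r - c_g·s)²) dr ds = (1/(2 c_l c_g))·[(1-c_l-c_g)²·ln((1-c_l-c_g)²) - (1-c_g)²·ln((1-c_g)²) - (1-c_l)²·ln((1-c_l)²)] - 3. -/
open Real MeasureTheory intervalIntegral Set


lemma my_log_bound {b x : ℝ} (hx : x ∈ Set.Ioc 0 b) :
    |Real.log x| ≤ 2 * x ^ (-(1:ℝ)/2) + |Real.log b| := by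
  obtain ⟨hx0, hxb⟩ := hx
  have hsx : 0 < Real.sqrt x := Real.sqrt_pos.2 hx0
  have hrw : x ^ (-(1:ℝ)/2) = (Real.sqrt x)⁻¹ := by
    rw [Real.sqrt_eq_rpow, ← Real.rpow_neg hx0.le]
    norm_num
  rcases le_or_gt x 1 with h1 | h1
  · have hlog : Real.log x ≤ 0 := Real.log_nonpos hx0.le h1
    have h2 : -Real.log x = 2 * Real.log (Real.sqrt x)⁻¹ := by
      rw [Real.log_inv, Real.log_sqrt hx0.le]; ring
    have h3 : Real.log (Real.sqrt x)⁻¹ ≤ (Real.sqrt x)⁻¹ - 1 :=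
      Real.log_le_sub_one_of_pos (by positivity)
    have : |Real.log x| = -Real.log x := abs_of_nonpos hlog
    rw [this, h2, hrw]
    have := abs_nonneg (Real.log b)
    nlinarith
  · have hb1 : 1 < b := lt_of_lt_of_le h1 hxb
    have hlx : 0 ≤ Real.log x := Real.log_nonneg h1.le
    rw [abs_of_nonneg hlx]
    have h4 : Real.log x ≤ Real.log b := Real.log_le_log hx0 hxb
    have h5 : Real.log b ≤ |Real.log b| := le_abs_self _
    have h6 : 0 ≤ x ^ (-(1:ℝ)/2) := Real.rpow_nonneg hx0.le _
    linarith

lemma my_intervalIntegrable_log (a b : ℝ) : IntervalIntegrable Real.log volume a b := by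
  have key : ∀ c : ℝ, 0 < c → IntervalIntegrable Real.log volume 0 c := by
    intro c hc
    have h1 : IntervalIntegrable (fun x => 2 * x ^ (-(1:ℝ)/2) + |Real.log c|) volume 0 c :=
      ((intervalIntegrable_rpow' (by norm_num)).const_mul 2).add intervalIntegrable_const
    refine h1.mono_fun Real.measurable_log.aestronglyMeasurable ?_
    rw [Filter.EventuallyLE, uIoc_of_le hc.le, ae_restrict_iff' measurableSet_Ioc]
    refine Filter.Eventually.of_forall fun x hx => ?_
    simp only [Real.norm_eq_abs]
    exact (my_log_bound hx).trans (le_abs_self _)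
  have key0 : ∀ c : ℝ, IntervalIntegrable Real.log volume 0 c := by
    intro c
    rcases lt_trichotomy c 0 with h | h | h
    · have h2 := (IntervalIntegrable.iff_comp_neg (f := Real.log)).mp (key (-c) (by linarith))
      have heq : (fun x : ℝ => Real.log (-x)) = Real.log := funext Real.log_neg_eq_log
      rw [heq] at h2
      simpa using h2
    · simp [h]
    · exact key c h
  exact (key0 a).symm.trans (key0 b)

lemma my_integral_log_nonneg {b : ℝ} (hb : 0 ≤ b) :
    ∫ x in (0:ℝ)..b, Real.log x = b * Real.log b - b := by
  have hF : ContinuousOn (fun x : ℝ => x * Real.log x - x) (Icc 0 b) :=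
    (Real.continuous_mul_log.sub continuous_id).continuousOn
  have hd : ∀ x ∈ Ioo (0:ℝ) b, HasDerivWithinAt (fun x : ℝ => x * Real.log x - x)
      (Real.log x) (Ioi x) x := by
    intro x hx
    have h := (Real.hasDerivAt_mul_log (ne_of_gt hx.1)).sub (hasDerivAt_id x)
    exact (h.congr_deriv (by ring)).hasDerivWithinAt
  have := integral_eq_sub_of_hasDeriv_right_of_le hb hF hd (my_intervalIntegrable_log 0 b)
  simpa using this

lemma my_integral_log (a b : ℝ) :
    ∫ x in a..b, Real.log x = (b * Real.log b - b) - (a * Real.log a - a) := by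
  have h0 : ∀ c : ℝ, ∫ x in (0:ℝ)..c, Real.log x = c * Real.log c - c := by
    intro c
    rcases le_or_gt 0 c with h | h
    · exact my_integral_log_nonneg h
    · have heq : ∫ x in (0:ℝ)..c, Real.log x = ∫ x in (0:ℝ)..c, Real.log (-x) := by
        simp [Real.log_neg_eq_log]
      rw [heq, integral_comp_neg, neg_zero, integral_symm,
        my_integral_log_nonneg (by linarith : (0:ℝ) ≤ -c), ← Real.log_neg_eq_log c]
      ring
  rw [← integral_interval_sub_left (my_intervalIntegrable_log 0 b)
    (my_intervalIntegrable_log 0 a), h0, h0]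

lemma my_hasDerivAt_mul_log (x : ℝ) :
    HasDerivAt (fun t : ℝ => t^2/2 * Real.log t - t^2/4) (x * Real.log x) x := by
  rcases eq_or_ne x 0 with rfl | hx
  · rw [hasDerivAt_iff_tendsto_slope]
    have hs : ∀ t : ℝ, t ≠ 0 → slope (fun t : ℝ => t^2/2 * Real.log t - t^2/4) 0 t
        = (t * Real.log t)/2 - t/4 := by
      intro t ht
      simp only [slope_def_field]
      field_simp
      ring
    have htend : Filter.Tendsto (fun t : ℝ => (t * Real.log t)/2 - t/4) (nhds 0)
        (nhds ((0 * Real.log 0)/2 - 0/4)) := by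
      exact ((Real.continuous_mul_log.tendsto 0).div_const 2).sub
        ((continuous_id.tendsto 0).div_const 4)
    simp only [Real.log_zero, mul_zero, zero_mul, zero_div, sub_zero] at htend ⊢
    refine Filter.Tendsto.congr' ?_ (htend.mono_left nhdsWithin_le_nhds)
    filter_upwards [self_mem_nhdsWithin] with t ht
    exact (hs t ht).symm
  · have h1 : HasDerivAt (fun t : ℝ => t^2/2) x x := by
      simpa using (hasDerivAt_pow 2 x).div_const 2
    have h3 : HasDerivAt (fun t : ℝ => t^2/4) (x/2) x := by
      have := (hasDerivAt_pow 2 x).div_const 4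
      simpa using this.congr_deriv (by ring)
    have h2 := (h1.mul (Real.hasDerivAt_log hx)).sub h3
    refine h2.congr_deriv ?_
    field_simp
    ring

lemma my_integral_mul_log (a b : ℝ) :
    ∫ x in a..b, x * Real.log x
      = (b^2/2 * Real.log b - b^2/4) - (a^2/2 * Real.log a - a^2/4) :=
  integral_eq_sub_of_hasDerivAt (fun x _ => my_hasDerivAt_mul_log x)
    (Real.continuous_mul_log.intervalIntegrable a b)

lemma my_integral_G (a b : ℝ) :
    ∫ x in a..b, (x * Real.log x - x)
      = (b^2/2 * Real.log b - b^2/4 - b^2/2) - (a^2/2 * Real.log a - a^2/4 - a^2/2) := by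
  rw [integral_sub (Real.continuous_mul_log.intervalIntegrable a b)
    (continuous_id'.intervalIntegrable a b), my_integral_mul_log, integral_id]
  ring

/-- closed form of the double integral
`∫₀¹∫₀¹ ln((1 - c_l·r - c_g·s)²) dr ds`. -/
theorem stmt10 (cl cg : ℝ) (hcl : cl ≠ 0) (hcg : cg ≠ 0) :
    ∫ s in (0:ℝ)..1, ∫ r in (0:ℝ)..1, Real.log ((1 - cl * r - cg * s) ^ 2)
      = (1 / (2 * cl * cg)) *
          ((1 - cl - cg) ^ 2 * Real.log ((1 - cl - cg) ^ 2)
            - (1 - cg) ^ 2 * Real.log ((1 - cg) ^ 2)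
            - (1 - cl) ^ 2 * Real.log ((1 - cl) ^ 2)) - 3 := by
  have hGc : Continuous (fun x : ℝ => x * Real.log x - x) :=
    Real.continuous_mul_log.sub continuous_id
  -- inner integral
  have hinner : ∀ s : ℝ, ∫ r in (0:ℝ)..1, Real.log ((1 - cl * r - cg * s) ^ 2)
      = 2/cl * ((1 - cg * s) * Real.log (1 - cg * s) - (1 - cg * s))
        - 2/cl * ((1 - cl - cg * s) * Real.log (1 - cl - cg * s) - (1 - cl - cg * s)) := by
    intro s
    have h1 : ∀ r : ℝ, Real.log ((1 - cl * r - cg * s) ^ 2)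
        = 2 * Real.log ((1 - cg * s) - cl * r) := by
      intro r
      rw [show (1 - cl * r - cg * s) = (1 - cg * s) - cl * r by ring, Real.log_pow]
      push_cast; ring
    simp only [h1]
    rw [intervalIntegral.integral_const_mul,
      integral_comp_sub_mul Real.log hcl (1 - cg * s),
      show (1 - cg * s) - cl * 1 = 1 - cl - cg * s by ring,
      show (1 - cg * s) - cl * 0 = 1 - cg * s by ring,
      my_integral_log, smul_eq_mul]
    field_simp
  simp only [hinner]
  have hI1 : IntervalIntegrable
      (fun s : ℝ => 2/cl * ((1 - cg * s) * Real.log (1 - cg * s) - (1 - cg * s)))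
      volume 0 1 :=
    ((continuous_const.mul (hGc.comp (continuous_const.sub
      (continuous_const.mul continuous_id')))).intervalIntegrable 0 1)
  have hI2 : IntervalIntegrable
      (fun s : ℝ => 2/cl * ((1 - cl - cg * s) * Real.log (1 - cl - cg * s) - (1 - cl - cg * s)))
      volume 0 1 :=
    ((continuous_const.mul (hGc.comp (continuous_const.sub
      (continuous_const.mul continuous_id')))).intervalIntegrable 0 1)
  rw [integral_sub hI1 hI2, intervalIntegral.integral_const_mul,
    intervalIntegral.integral_const_mul,
    integral_comp_sub_mul (fun x : ℝ => x * Real.log x - x) hcg 1,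
    integral_comp_sub_mul (fun x : ℝ => x * Real.log x - x) hcg (1 - cl),
    show (1:ℝ) - cg * 1 = 1 - cg by ring, show (1:ℝ) - cg * 0 = 1 by ring,
    show (1:ℝ) - cl - cg * 1 = 1 - cl - cg by ring,
    show (1:ℝ) - cl - cg * 0 = 1 - cl by ring,
    my_integral_G, my_integral_G, smul_eq_mul, smul_eq_mul,
    Real.log_pow, Real.log_pow, Real.log_pow]
  simp only [Real.log_one]
  push_cast
  field_simp
  ring
end

section
/- Define D(c) = (1/(2c²))·[(1-2c)²·ln((1-2c)²) - 2(1-c)²·ln((1-c)²)] - 3 for c > 0. Then D is continuous on (0, ∞) (with the values at c = 1/2 and c = 1 interpreted via 0·ln 0 = 0), D(c) < 0 for all sufficiently small c > 0, and D(c) > 0 for all sufficiently large c; consequently there exists λ ∈ (2, 3) with D(λ) = 0. -/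
open Filter

lemma log_one_sub_bounds' {x : ℝ} (h0 : 0 ≤ x) (h1 : x ≤ 1/50) :
    Real.log (1 - x) ≤ -x - x^2/2 - x^3/3 + 2*x^4 ∧
    -x - x^2/2 - x^3/3 - 2*x^4 ≤ Real.log (1 - x) := by
  have hx : |x| < 1 := by rw [abs_of_nonneg h0]; linarith
  have h := Real.abs_log_sub_add_sum_range_le hx 3
  rw [abs_of_nonneg h0] at h
  have hsum : (∑ i ∈ Finset.range 3, x ^ (i + 1) / (i + 1)) = x + x^2/2 + x^3/3 := by
    simp [Finset.sum_range_succ]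
    norm_num
  rw [hsum] at h
  norm_num at h
  have hR : x^4/(1-x) ≤ 2*x^4 := by
    rw [div_le_iff₀ (by linarith)]
    nlinarith [mul_nonneg (pow_nonneg h0 4) (by linarith : (0:ℝ) ≤ 1-2*x)]
  rw [abs_le] at h
  constructor <;> nlinarith [h.1, h.2]

lemma D_aux_neg' {c M : ℝ} (hc : 0 < c) : 1/(2*c^2) * M - 3 < 0 ↔ M < 6*c^2 := by
  have h2 : (0:ℝ) < 2*c^2 := by positivity
  rw [sub_neg, one_div, inv_mul_eq_div, div_lt_iff₀ h2]
  constructor <;> intro <;> linarith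

lemma D_aux_pos' {c M : ℝ} (hc : 0 < c) : 0 < 1/(2*c^2) * M - 3 ↔ 6*c^2 < M := by
  have h2 : (0:ℝ) < 2*c^2 := by positivity
  rw [sub_pos, one_div, inv_mul_eq_div, lt_div_iff₀ h2]
  constructor <;> intro <;> linarith

lemma exp8_lt' : Real.exp 8 < 3125 := by
  have h : Real.exp 8 = Real.exp 1 ^ 8 := by rw [← Real.exp_nat_mul]; norm_num
  have hp : Real.exp 1 ^ 8 < 2.7182818286 ^ 8 :=
    pow_lt_pow_left₀ Real.exp_one_lt_d9 (Real.exp_pos 1).le (by norm_num)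
  rw [h]
  calc Real.exp 1 ^ 8 < 2.7182818286 ^ 8 := hp
    _ < 3125 := by norm_num

lemma exp8_gt' : (729:ℝ) < Real.exp 8 := by
  have h : Real.exp 8 = Real.exp 1 ^ 8 := by rw [← Real.exp_nat_mul]; norm_num
  have hp : (2.7182818283:ℝ) ^ 8 < Real.exp 1 ^ 8 :=
    pow_lt_pow_left₀ Real.exp_one_gt_d9 (by norm_num) (by norm_num)
  rw [h]
  calc (729:ℝ) < 2.7182818283 ^ 8 := by norm_num
    _ < Real.exp 1 ^ 8 := hp

lemma exp3_lt' : Real.exp 3 < 21 := by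
  have h : Real.exp 3 = Real.exp 1 ^ 3 := by rw [← Real.exp_nat_mul]; norm_num
  have hp : Real.exp 1 ^ 3 < 2.7182818286 ^ 3 :=
    pow_lt_pow_left₀ Real.exp_one_lt_d9 (Real.exp_pos 1).le (by norm_num)
  rw [h]
  calc Real.exp 1 ^ 3 < 2.7182818286 ^ 3 := hp
    _ < 21 := by norm_num

lemma log9_lt' : Real.log 9 < 8/3 := by
  rw [Real.log_lt_iff_lt_exp (by norm_num)]
  have he : (Real.exp (8/3))^3 = Real.exp 8 := by
    rw [← Real.exp_nat_mul]; norm_num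
  have h3 : ((9:ℝ))^3 < (Real.exp (8/3))^3 := by
    rw [he]
    calc ((9:ℝ))^3 = 729 := by norm_num
      _ < Real.exp 8 := exp8_gt'
  exact lt_of_pow_lt_pow_left₀ 3 (Real.exp_pos _).le h3

lemma log5_gt' : (8/5:ℝ) < Real.log 5 := by
  rw [Real.lt_log_iff_exp_lt (by norm_num)]
  have he : (Real.exp (8/5))^5 = Real.exp 8 := by
    rw [← Real.exp_nat_mul]; norm_num
  have h5 : (Real.exp (8/5))^5 < (5:ℝ)^5 := by
    rw [he]
    calc Real.exp 8 < 3125 := exp8_lt'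
      _ = (5:ℝ)^5 := by norm_num
  exact lt_of_pow_lt_pow_left₀ 5 (by norm_num) h5


/-- properties of
`D(c) = (1/(2c²))·[(1-2c)²·ln((1-2c)²) - 2(1-c)²·ln((1-c)²)] - 3`:
continuity on `(0,∞)`, negativity near 0, positivity for large `c`, and a
root `λ ∈ (2,3)`.  (In Lean `Real.log 0 = 0`, which realizes the convention
`0·ln 0 = 0`.) -/
theorem stmt12 (D : ℝ → ℝ)
    (hD : ∀ c : ℝ, D c = (1 / (2 * c ^ 2)) *
        ((1 - 2 * c) ^ 2 * Real.log ((1 - 2 * c) ^ 2)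
          - 2 * (1 - c) ^ 2 * Real.log ((1 - c) ^ 2)) - 3) :
    ContinuousOn D (Set.Ioi (0:ℝ)) ∧
    (∀ᶠ c in nhdsWithin (0:ℝ) (Set.Ioi 0), D c < 0) ∧
    (∀ᶠ c in atTop, D c > 0) ∧
    ∃ l ∈ Set.Ioo (2:ℝ) 3, D l = 0 := by
  -- continuity
  have hcont : ContinuousOn D (Set.Ioi (0:ℝ)) := by
    have h1 : Continuous fun c : ℝ => (1 - 2*c)^2 * Real.log ((1 - 2*c)^2) :=
      Real.continuous_mul_log.comp (by continuity)
    have h2 : Continuous fun c : ℝ => (1 - c)^2 * Real.log ((1 - c)^2) :=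
      Real.continuous_mul_log.comp (by continuity)
    have hM : Continuous fun c : ℝ =>
        (1 - 2*c)^2 * Real.log ((1 - 2*c)^2) - 2*(1 - c)^2 * Real.log ((1 - c)^2) := by
      have hcc : Continuous fun _ : ℝ => (2:ℝ) := continuous_const
      have := h1.sub (hcc.mul h2)
      simpa [mul_assoc, Pi.sub_def, Pi.mul_def] using this
    have hinv : ContinuousOn (fun c : ℝ => 1/(2*c^2)) (Set.Ioi 0) := by
      apply ContinuousOn.div continuousOn_const (by fun_prop)
      intro x hx
      have : (0:ℝ) < x := hx
      positivity
    have : ContinuousOn (fun c : ℝ => (1/(2*c^2)) *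
        ((1 - 2*c)^2 * Real.log ((1 - 2*c)^2) - 2*(1 - c)^2 * Real.log ((1 - c)^2)) - 3)
        (Set.Ioi 0) := (hinv.mul hM.continuousOn).sub continuousOn_const
    exact this.congr fun c _ => hD c
  refine ⟨hcont, ?_, ?_, ?_⟩
  · -- negative near 0
    have hmem : Set.Ioo (0:ℝ) (1/100) ∈ nhdsWithin (0:ℝ) (Set.Ioi 0) :=
      Ioo_mem_nhdsGT_of_mem (by norm_num : (0:ℝ) ∈ Set.Ico (0:ℝ) (1/100))
    refine Filter.eventually_of_mem hmem fun c hc => ?_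
    obtain ⟨hc0, hc1⟩ := hc
    rw [hD c, D_aux_neg' hc0]
    have e1 : Real.log ((1 - 2*c)^2) = 2 * Real.log (1 - 2*c) := by
      rw [Real.log_pow]; norm_num
    have e2 : Real.log ((1 - c)^2) = 2 * Real.log (1 - c) := by
      rw [Real.log_pow]; norm_num
    rw [e1, e2]
    have hb1 := (log_one_sub_bounds' (x := 2*c) (by linarith) (by linarith)).1
    have hb2 := (log_one_sub_bounds' (x := c) (by linarith) (by linarith)).2
    have h1 : (1 - 2*c)^2 * Real.log (1 - 2*c) ≤
        (1 - 2*c)^2 * (-(2*c) - (2*c)^2/2 - (2*c)^3/3 + 2*(2*c)^4) :=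
      mul_le_mul_of_nonneg_left hb1 (sq_nonneg _)
    have h2 : (1 - c)^2 * (-c - c^2/2 - c^3/3 - 2*c^4) ≤
        (1 - c)^2 * Real.log (1 - c) :=
      mul_le_mul_of_nonneg_left hb2 (sq_nonneg _)
    nlinarith [h1, h2, hc0, hc1, pow_pos hc0 3, pow_pos hc0 4, pow_pos hc0 5]
  · -- positive at infinity
    refine Filter.eventually_atTop.2 ⟨21, fun c hc => ?_⟩
    have hc0 : (0:ℝ) < c := by linarith
    rw [hD c, gt_iff_lt, D_aux_pos' hc0]
    have r1 : ((1:ℝ) - 2*c)^2 = (2*c - 1)^2 := by ring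
    have r2 : ((1:ℝ) - c)^2 = (c - 1)^2 := by ring
    rw [r1, r2]
    have e1 : Real.log ((2*c - 1)^2) = 2 * Real.log (2*c - 1) := by
      rw [Real.log_pow]; norm_num
    have e2 : Real.log ((c - 1)^2) = 2 * Real.log (c - 1) := by
      rw [Real.log_pow]; norm_num
    rw [e1, e2]
    have hl2 : 0 ≤ Real.log (c - 1) := Real.log_nonneg (by linarith)
    have h12 : Real.log (c - 1) ≤ Real.log (2*c - 1) :=
      Real.log_le_log (by linarith) (by linarith)
    have h3 : 3 < Real.log (2*c - 1) := by
      rw [Real.lt_log_iff_exp_lt (by linarith)]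
      exact lt_of_lt_of_le exp3_lt' (by linarith)
    have key : 6*c^2 < 2*(2*c^2 - 1) * Real.log (2*c - 1) := by
      have hpos : (0:ℝ) < 2*(2*c^2 - 1) := by nlinarith
      have := mul_lt_mul_of_pos_left h3 hpos
      nlinarith
    have h4 : 4*(c - 1)^2 * Real.log (c - 1) ≤ 4*(c - 1)^2 * Real.log (2*c - 1) := by
      have : (0:ℝ) ≤ 4*(c - 1)^2 := by positivity
      exact mul_le_mul_of_nonneg_left h12 this
    have idr : (2*c - 1)^2 * (2 * Real.log (2*c - 1))
        - 4*(c - 1)^2 * Real.log (2*c - 1) = 2*(2*c^2 - 1) * Real.log (2*c - 1) := by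
      ring
    linarith [key, h4, idr]
  · -- root in (2,3)
    have hsub : Set.Icc (2:ℝ) 3 ⊆ Set.Ioi 0 := fun x hx =>
      lt_of_lt_of_le (by norm_num) hx.1
    have hD2 : D 2 < 0 := by
      rw [hD 2]
      norm_num
      nlinarith [log9_lt']
    have hD3 : 0 < D 3 := by
      rw [hD 3]
      norm_num
      have l25 : Real.log 25 = 2 * Real.log 5 := by
        rw [show (25:ℝ) = 5^2 by norm_num, Real.log_pow]; norm_num
      have l4 : Real.log 4 = 2 * Real.log 2 := by
        rw [show (4:ℝ) = 2^2 by norm_num, Real.log_pow]; norm_num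
      nlinarith [log5_gt', Real.log_two_lt_d9, l25, l4]
    obtain ⟨l, hl, hl0⟩ :=
      intermediate_value_Ioo (by norm_num : (2:ℝ) ≤ 3) (hcont.mono hsub) ⟨hD2, hD3⟩
    exact ⟨l, hl, hl0⟩
end

section
/- Let χ = 0 and c_l = 0, c_g = c with 0 < c < 1. Then E[ln((1 - c·s)²)] = -((1-c)/c)·ln((1-c)²) - 1 - 1, i.e., equals -((1-c)/c)·ln((1-c)²) - 2, where s is uniform on [0,1]; moreover this value equals the limit of the two-parameter formula (1/(2 c_l c_g))[(1-c_l-c_g)² ln((1-c_l-c_g)²) - (1-c_g)² ln((1-c_g)²) - (1-c_l)² ln((1-c_l)²)] - 3 as c_l → 0 with c_g = c. -/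
open MeasureTheory Filter

lemma aux_hg {t : ℝ} (ht : t ≠ 0) :
    HasDerivAt (fun t : ℝ => t ^ 2 * Real.log (t ^ 2))
      (2 * t * Real.log (t ^ 2) + 2 * t) t := by
  have h1 : HasDerivAt (fun t : ℝ => t ^ 2) (2 * t) t := by
    simpa using hasDerivAt_pow 2 t
  have h2 : HasDerivAt (fun t : ℝ => Real.log (t ^ 2)) ((2 * t) / t ^ 2) t :=
    h1.log (pow_ne_zero 2 ht)
  have := h1.mul h2
  refine this.congr_deriv ?_
  field_simp

lemma aux_H {c x : ℝ} (hc : c ≠ 0) (h : 1 - c * x ≠ 0) :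
    HasDerivAt (fun x : ℝ => -(1 / c) * ((1 - c * x) * Real.log ((1 - c * x) ^ 2)
        - 2 * (1 - c * x))) (Real.log ((1 - c * x) ^ 2)) x := by
  have hu : HasDerivAt (fun x : ℝ => 1 - c * x) (-c) x := by
    simpa using ((hasDerivAt_id x).const_mul c).const_sub 1
  have hlog : HasDerivAt (fun x : ℝ => Real.log ((1 - c * x) ^ 2))
      ((2 * (1 - c * x) * (-c)) / (1 - c * x) ^ 2) x := by
    have hp : HasDerivAt (fun x : ℝ => (1 - c * x) ^ 2) (2 * (1 - c * x) * (-c)) x := by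
      have := hu.pow 2
      refine this.congr_deriv ?_; norm_num
    exact hp.log (pow_ne_zero 2 h)
  have := ((hu.mul hlog).sub (hu.const_mul 2)).const_mul (-(1 / c))
  refine this.congr_deriv ?_
  field_simp
  ring

/-- for `χ = 0`, `c_l = 0`, `c_g = c` with `0 < c < 1`:
`E[ln((1-c·s)²)] = -((1-c)/c)·ln((1-c)²) - 2` for `s` uniform on `[0,1]`, and
this value is the limit as `c_l → 0` of the two-parameter closed formula. -/
theorem stmt16 {Ω : Type*} [MeasurableSpace Ω] (μ : Measure Ω)
    [IsProbabilityMeasure μ]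
    (s : Ω → ℝ) (hms : Measurable s)
    (hs : Measure.map s μ = volume.restrict (Set.Icc (0:ℝ) 1))
    (c : ℝ) (hc0 : 0 < c) (hc1 : c < 1)
    (F : ℝ → ℝ → ℝ)
    (hF : ∀ cl cg : ℝ, F cl cg = (1 / (2 * cl * cg)) *
        ((1 - cl - cg) ^ 2 * Real.log ((1 - cl - cg) ^ 2)
          - (1 - cg) ^ 2 * Real.log ((1 - cg) ^ 2)
          - (1 - cl) ^ 2 * Real.log ((1 - cl) ^ 2)) - 3) :
    (∫ ω, Real.log ((1 - c * s ω) ^ 2) ∂μ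
        = -((1 - c) / c) * Real.log ((1 - c) ^ 2) - 2) ∧
    Tendsto (fun cl => F cl c) (nhdsWithin 0 {0}ᶜ)
      (nhds (-((1 - c) / c) * Real.log ((1 - c) ^ 2) - 2)) := by
  have hcne : c ≠ 0 := hc0.ne'
  have h1c : (0:ℝ) < 1 - c := by linarith
  constructor
  · -- the integral part
    have hmeas : Measurable fun x : ℝ => Real.log ((1 - c * x) ^ 2) := by
      exact Real.measurable_log.comp (((measurable_const.sub (measurable_id.const_mul c)).pow_const 2))
    have h1 : ∫ ω, Real.log ((1 - c * s ω) ^ 2) ∂μ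
        = ∫ x in Set.Icc (0:ℝ) 1, Real.log ((1 - c * x) ^ 2) := by
      rw [← hs, integral_map hms.aemeasurable hmeas.aestronglyMeasurable]
    rw [h1, MeasureTheory.integral_Icc_eq_integral_Ioc,
      ← intervalIntegral.integral_of_le (by norm_num : (0:ℝ) ≤ 1)]
    have hne : ∀ x ∈ Set.uIcc (0:ℝ) 1, 1 - c * x ≠ 0 := by
      intro x hx
      rw [Set.uIcc_of_le (by norm_num : (0:ℝ) ≤ 1)] at hx
      nlinarith [hx.1, hx.2]
    have hcont : ContinuousOn (fun x : ℝ => Real.log ((1 - c * x) ^ 2))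
        (Set.uIcc (0:ℝ) 1) := by
      apply ContinuousOn.log (by fun_prop)
      intro x hx
      exact pow_ne_zero 2 (hne x hx)
    rw [intervalIntegral.integral_eq_sub_of_hasDerivAt
      (fun x hx => aux_H hcne (hne x hx)) (hcont.intervalIntegrable)]
    have hlog1 : Real.log ((1 - c * 1) ^ 2) = Real.log ((1 - c) ^ 2) := by norm_num
    simp only [mul_one, mul_zero, sub_zero, Real.log_one, one_pow]
    field_simp
    ring
  · -- the limit part
    set G : ℝ → ℝ := fun cl => (1 - cl - c) ^ 2 * Real.log ((1 - cl - c) ^ 2)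
        - (1 - c) ^ 2 * Real.log ((1 - c) ^ 2)
        - (1 - cl) ^ 2 * Real.log ((1 - cl) ^ 2) with hG
    have hinner1 : HasDerivAt (fun cl : ℝ => 1 - cl - c) (-1) 0 := by
      simpa using ((hasDerivAt_id (0:ℝ)).const_sub 1).sub_const c
    have hinner2 : HasDerivAt (fun cl : ℝ => 1 - cl) (-1) 0 := by
      simpa using (hasDerivAt_id (0:ℝ)).const_sub 1
    have hA : HasDerivAt (fun cl : ℝ => (1 - cl - c) ^ 2 * Real.log ((1 - cl - c) ^ 2))
        ((2 * (1 - c) * Real.log ((1 - c) ^ 2) + 2 * (1 - c)) * (-1)) 0 := by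
      have := (aux_hg (t := 1 - (0:ℝ) - c) (by simpa using h1c.ne')).comp 0 hinner1
      simpa [Function.comp_def] using this
    have hB : HasDerivAt (fun cl : ℝ => (1 - cl) ^ 2 * Real.log ((1 - cl) ^ 2))
        ((2 * 1 * Real.log ((1:ℝ) ^ 2) + 2 * 1) * (-1)) 0 := by
      have := (aux_hg (t := 1 - (0:ℝ)) (by norm_num)).comp 0 hinner2
      simpa [Function.comp_def] using this
    have hGD : HasDerivAt G
        ((2 * (1 - c) * Real.log ((1 - c) ^ 2) + 2 * (1 - c)) * (-1)
          - (2 * 1 * Real.log ((1:ℝ) ^ 2) + 2 * 1) * (-1)) 0 := by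
      have := (hA.sub_const ((1 - c) ^ 2 * Real.log ((1 - c) ^ 2))).sub hB
      exact this.congr_deriv (by simp)
    have hslope := hasDerivAt_iff_tendsto_slope.mp hGD
    set D : ℝ := (2 * (1 - c) * Real.log ((1 - c) ^ 2) + 2 * (1 - c)) * (-1)
          - (2 * 1 * Real.log ((1:ℝ) ^ 2) + 2 * 1) * (-1) with hD
    have hlim : Tendsto (fun cl => slope G 0 cl / (2 * c) - 3) (nhdsWithin 0 {0}ᶜ)
        (nhds (D / (2 * c) - 3)) :=
      (hslope.div_const (2 * c)).sub_const 3
    have hval : D / (2 * c) - 3 = -((1 - c) / c) * Real.log ((1 - c) ^ 2) - 2 := by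
      rw [hD]
      simp only [Real.log_one, one_pow]
      field_simp
      ring
    rw [← hval]
    apply hlim.congr'
    filter_upwards [self_mem_nhdsWithin] with cl hcl
    have hcl0 : cl ≠ 0 := hcl
    have hG0 : G 0 = 0 := by simp [hG]
    rw [hF]
    rw [slope_def_field]
    simp only [hG, sub_zero, one_pow, Real.log_one]
    field_simp
    ring
end
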